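/- arXiv:2402.08929 — 3 statements merged into one kernel-verified Lean document; each statement's English description precedes it below -/
import Mathlib

section
/- Let A, B be symmetric positive-definite d×d real matrices with A ⪯ B. Then tr((B − A)·B⁻¹) ≤ log(det(B)/det(A)). -/
/-!
With `S = √(B⁻¹)`, the matrix `M = S A S` is positive definite, `tr M = tr (A B⁻¹)` and
`det M = det A / det B`. Summing `log λ ≤ λ - 1` over the eigenvalues of `M` gives
`log det M ≤ tr M - d`, which rearranges to the claim since
`tr ((B - A) B⁻¹) = d - tr (A B⁻¹)`.
-/

open Matrix
open scoped MatrixOrder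

namespace Matrix.PosDef

variable {n : Type*} [Fintype n] [DecidableEq n]

theorem log_det_le_trace_sub_card {M : Matrix n n ℝ} (hM : M.PosDef) :
    Real.log M.det ≤ M.trace - Fintype.card n := by
  have hpos := hM.eigenvalues_pos
  rw [hM.isHermitian.det_eq_prod_eigenvalues, hM.isHermitian.trace_eq_sum_eigenvalues]
  simp only [RCLike.ofReal_real_eq_id, id_eq]
  rw [Real.log_prod fun i _ => (hpos i).ne', Fintype.card_eq_sum_ones, Nat.cast_sum, Nat.cast_one,
    ← Finset.sum_sub_distrib]
  exact Finset.sum_le_sum fun i _ => Real.log_le_sub_one_of_pos (hpos i)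

theorem log_det_sub_log_det_le_trace_mul_inv_sub_card {A B : Matrix n n ℝ} (hA : A.PosDef)
    (hB : B.PosDef) : Real.log A.det - Real.log B.det ≤ (A * B⁻¹).trace - Fintype.card n := by
  set S := CFC.sqrt B⁻¹
  have hSS : S * S = B⁻¹ := CFC.sqrt_mul_sqrt_self _ hB.inv.posSemidef.nonneg
  have hSH : Sᴴ = S := (nonneg_iff_posSemidef.mp (CFC.sqrt_nonneg B⁻¹)).isHermitian.eq
  have hSdet : S.det * S.det = B.det⁻¹ := by
    rw [← det_mul, hSS, det_nonsing_inv, Ring.inverse_eq_inv]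
  have hSunit : IsUnit S := by
    rw [isUnit_iff_isUnit_det, isUnit_iff_ne_zero]
    exact left_ne_zero_of_mul (hSdet ▸ inv_ne_zero hB.det_pos.ne')
  have hM : (S * A * S).PosDef := by
    simpa only [hSH] using hA.conjTranspose_mul_mul_same (mulVec_injective_iff_isUnit.mpr hSunit)
  have htrace : (S * A * S).trace = (A * B⁻¹).trace := by
    rw [trace_mul_comm, ← mul_assoc, hSS, trace_mul_comm]
  have hdet : (S * A * S).det = A.det * B.det⁻¹ := by
    rw [det_mul, det_mul, ← hSdet]; ring
  have := hM.log_det_le_trace_sub_card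
  rwa [htrace, hdet, Real.log_mul hA.det_pos.ne' (inv_ne_zero hB.det_pos.ne'), Real.log_inv,
    ← sub_eq_add_neg] at this

end Matrix.PosDef

theorem trace_sub_mul_inv_le_log_det_ratio_general {d : ℕ} (A B : Matrix (Fin d) (Fin d) ℝ)
    (hA : A.PosDef) (hB : B.PosDef) :
    ((B - A) * B⁻¹).trace ≤ Real.log (B.det / A.det) := by
  have hlog := hA.log_det_sub_log_det_le_trace_mul_inv_sub_card hB
  rw [Fintype.card_fin] at hlog
  calc ((B - A) * B⁻¹).trace = d - (A * B⁻¹).trace := by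
        rw [sub_mul, mul_nonsing_inv _ hB.det_pos.ne'.isUnit, trace_sub, trace_one,
          Fintype.card_fin]
    _ ≤ Real.log B.det - Real.log A.det := by linarith
    _ = Real.log (B.det / A.det) := (Real.log_div hB.det_pos.ne' hA.det_pos.ne').symm

/-- Potential-function inequality: for `A ⪯ B` positive definite,
`tr((B − A)·B⁻¹) ≤ log(det B / det A)`. -/
theorem trace_sub_mul_inv_le_log_det_ratio {d : ℕ} (A B : Matrix (Fin d) (Fin d) ℝ)
    (hA : A.PosDef) (hB : B.PosDef) (hAB : (B - A).PosSemidef) :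
    ((B - A) * B⁻¹).trace ≤ Real.log (B.det / A.det) :=
  trace_sub_mul_inv_le_log_det_ratio_general A B hA hB
end

section
/- Fix T ≥ 1 and define ρ(t) = t − max{2^i : i ≥ 0, 2^i divides t} for t ∈ {1,...,T}. Define cut(t) = {s ∈ [T] : ρ(s) < t ≤ s}. Then the width w(ρ) = max_{t∈[T]} |cut(t)| satisfies w(ρ) ≤ ⌊log₂ T⌋ + 1. -/
/-- `ρ(t) = t − max{2^i : 2^i divides t}`; the maximal power of 2 dividing `t` is
`2 ^ (t.factorization 2)`. -/
def rho (t : ℕ) : ℕ := t - 2 ^ (t.factorization 2)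

/-- `cut(t) = {s ∈ [T] : ρ(s) < t ≤ s}`. -/
def cut (T t : ℕ) : Finset ℕ :=
  (Finset.Icc 1 T).filter (fun s => rho s < t ∧ t ≤ s)

/-!
Every `s ∈ cut T t` lies in `[t, t + 2^v)` with `v = v₂(s)` and is a multiple of `2^v`; an
interval of length `2^v` holds only one such multiple, so `s ↦ v₂(s)` is injective on the cut.
Since `2^{v₂(s)} ≤ s ≤ T`, it takes values in `{0, …, ⌊log₂ T⌋}`.
-/

open Finset

theorem Nat.eq_of_dvd_of_mem_Ico {m t a b : ℕ} (ha : m ∣ a) (hb : m ∣ b)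
    (ha' : a ∈ Ico t (t + m)) (hb' : b ∈ Ico t (t + m)) : a = b := by
  have hab : a ≡ b [MOD m] :=
    (Nat.modEq_zero_iff_dvd.2 ha).trans (Nat.modEq_zero_iff_dvd.2 hb).symm
  rw [mem_Ico] at ha' hb'
  exact hab.eq_of_abs_lt (abs_lt.2 ⟨by omega, by omega⟩)

variable {T t s : ℕ}

lemma ne_zero_of_mem_cut (hs : s ∈ cut T t) : s ≠ 0 := by
  have := (mem_filter.1 hs).1
  rw [mem_Icc] at this
  omega

lemma mem_Ico_of_mem_cut (hs : s ∈ cut T t) : s ∈ Ico t (t + 2 ^ s.factorization 2) := by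
  obtain ⟨-, hρ, hts⟩ := mem_filter.1 hs
  have := Nat.ordProj_le 2 (ne_zero_of_mem_cut hs)
  rw [rho] at hρ
  rw [mem_Ico]
  omega

lemma factorization_two_le_log_of_mem_cut (hs : s ∈ cut T t) :
    s.factorization 2 ≤ Nat.log 2 T :=
  Nat.le_log_of_pow_le one_lt_two <|
    (Nat.ordProj_le 2 (ne_zero_of_mem_cut hs)).trans (mem_Icc.1 (mem_filter.1 hs).1).2

lemma injOn_factorization_two_cut :
    Set.InjOn (fun s : ℕ ↦ s.factorization 2) (cut T t : Set ℕ) := by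
  intro a ha b hb (hv : a.factorization 2 = b.factorization 2)
  have hb_dvd := Nat.ordProj_dvd b 2
  have hb_mem := mem_Ico_of_mem_cut hb
  rw [← hv] at hb_dvd hb_mem
  exact Nat.eq_of_dvd_of_mem_Ico (Nat.ordProj_dvd a 2) hb_dvd (mem_Ico_of_mem_cut ha) hb_mem

theorem width_le_log_general (T : ℕ) :
    ∀ t ∈ Finset.Icc 1 T, (cut T t).card ≤ Nat.log 2 T + 1 := by
  intro t _
  calc (cut T t).card ≤ (range (Nat.log 2 T + 1)).card :=
        card_le_card_of_injOn _
          (fun s hs ↦ mem_range.2 (Nat.lt_succ_of_le (factorization_two_le_log_of_mem_cut hs)))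
          injOn_factorization_two_cut
    _ = Nat.log 2 T + 1 := card_range _

/-- The width of the multi-scaled random walk is at most `⌊log₂ T⌋ + 1`. -/
theorem width_le_log (T : ℕ) (hT : 1 ≤ T) :
    ∀ t ∈ Finset.Icc 1 T, (cut T t).card ≤ Nat.log 2 T + 1 :=
  width_le_log_general T
end

section
/- Let ξ₁,...,ξ_T be i.i.d. N(0,σ²) random variables and define the multi-scaled random walk n̄_t = n̄_{ρ(t)} + ξ_t with ρ(t) = t − max{2^i : 2^i divides t} and n̄₀ = 0. Suppose the depth satisfies |ρ*(t)| + 1 ≤ log(T/γ) for all t (which holds when the depth is at most ⌊log₂T⌋+1 and T/γ is large enough). Then for every γ ∈ (0,1), P(max_{1≤t≤T} |n̄_t| > 2σ·log(T/γ)) ≤ γ. -/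
/-!
Unfolding the recursion, `n̄_t` is the sum of the increments `ξ_s` over the ancestor chain of `t`,
so by independence it is sub-Gaussian with variance proxy `(|ρ*(t)| + 1)σ² ≤ Lσ²`, where
`L = log (T/γ)`. The Chernoff bound at level `2σL` gives `P(|n̄_t| > 2σL) ≤ 2e^{-2L} = 2(γ/T)e^{-L}`,
and `e^L ≥ L + 1 ≥ 2`, so the union bound over `t ∈ [1, T]` is at most `γ`.
-/

open MeasureTheory ProbabilityTheory
open scoped NNReal ENNReal

lemma rho_lt {t : ℕ} (ht : 1 ≤ t) : rho t < t :=
  Nat.sub_lt ht (by positivity)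

/-- The ancestor set `ρ*(t)`. -/
def ancestors : ℕ → Finset ℕ
  | t =>
    if h : 2 ≤ t then insert (rho t) (ancestors (rho t)) else ∅
  termination_by t => t
  decreasing_by exact rho_lt (le_trans one_le_two h)

/-- The multi-scaled random walk `n̄_t = n̄_{ρ(t)} + ξ_t`, `n̄_0 = 0`. -/
def nbar {Ω : Type*} (ξ : ℕ → Ω → ℝ) : ℕ → Ω → ℝ
  | t =>
    if h : 1 ≤ t then fun ω => nbar ξ (rho t) ω + ξ t ω else fun _ => 0
  termination_by t => t
  decreasing_by exact rho_lt h

open Real Finset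

lemma ancestors_lt {t s : ℕ} (hs : s ∈ ancestors t) : s < t := by
  induction t using Nat.strong_induction_on with
  | _ t ih =>
    rw [ancestors] at hs
    split_ifs at hs with h
    · have hρ := rho_lt (one_le_two.trans h)
      rcases mem_insert.mp hs with rfl | hs
      · exact hρ
      · exact (ih _ hρ hs).trans hρ
    · simp at hs

/-- `ρ*(t) ∪ {t}` without the root `0`, at which the walk carries no increment. -/
def ancestorChain (t : ℕ) : Finset ℕ := (insert t (ancestors t)).erase 0

lemma card_ancestorChain_le (t : ℕ) : #(ancestorChain t) ≤ #(ancestors t) + 1 :=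
  card_erase_le.trans (card_insert_le _ _)

lemma le_of_mem_ancestorChain {s t : ℕ} (h : s ∈ ancestorChain t) : s ≤ t := by
  rcases mem_insert.mp (mem_of_mem_erase h) with rfl | h
  · rfl
  · exact (ancestors_lt h).le

lemma ancestorChain_zero : ancestorChain 0 = ∅ := by
  rw [ancestorChain, ancestors]
  simp

lemma ancestorChain_of_one_le {t : ℕ} (ht : 1 ≤ t) :
    ancestorChain t = insert t (ancestorChain (rho t)) := by
  rcases ht.eq_or_lt with rfl | ht
  · have : rho 1 = 0 := by simp [rho]
    simp [ancestorChain, ancestors, this]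
  · rw [ancestorChain, ancestors, dif_pos (show 2 ≤ t from ht), erase_insert_of_ne (by omega),
      ancestorChain]

lemma nbar_eq_sum_ancestorChain {Ω : Type*} (ξ : ℕ → Ω → ℝ) (t : ℕ) :
    nbar ξ t = fun ω ↦ ∑ s ∈ ancestorChain t, ξ s ω := by
  induction t using Nat.strong_induction_on with
  | _ t ih =>
    rw [nbar]
    split_ifs with ht
    · have hρ := rho_lt ht
      have hnotin : t ∉ ancestorChain (rho t) := fun h ↦ (le_of_mem_ancestorChain h).not_gt hρ
      rw [ih _ hρ, ancestorChain_of_one_le ht]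
      ext ω
      rw [sum_insert hnotin, add_comm]
    · simp [Nat.lt_one_iff.mp (not_le.mp ht), ancestorChain_zero]

namespace ProbabilityTheory

variable {Ω : Type*} [MeasurableSpace Ω] {μ : Measure Ω} {X : Ω → ℝ}

lemma hasSubgaussianMGF_of_map_eq_gaussianReal {v : ℝ≥0} (h : μ.map X = gaussianReal 0 v) :
    HasSubgaussianMGF X v μ := by
  have hX : AEMeasurable X μ := aemeasurable_of_map_neZero (by rw [h]; infer_instance)
  refine (HasSubgaussianMGF.id_map_iff hX).mp ⟨fun t ↦ ?_, fun t ↦ ?_⟩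
  · rw [h]; exact integrable_exp_mul_gaussianReal t
  · simp [h, mgf_id_gaussianReal]

namespace HasSubgaussianMGF

variable {c : ℝ≥0}

lemma mono {d : ℝ≥0} (h : HasSubgaussianMGF X c μ) (hcd : c ≤ d) : HasSubgaussianMGF X d μ where
  integrable_exp_mul := h.integrable_exp_mul
  mgf_le t := (h.mgf_le t).trans (by gcongr)

lemma measureReal_le_abs_le (h : HasSubgaussianMGF X c μ) {ε : ℝ} (hε : 0 ≤ ε) :
    μ.real {ω | ε ≤ |X ω|} ≤ 2 * exp (-ε ^ 2 / (2 * c)) := by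
  have hsplit : {ω | ε ≤ |X ω|} = {ω | ε ≤ X ω} ∪ {ω | ε ≤ (-X) ω} := by
    ext ω; simp [le_abs', le_neg, or_comm]
  calc μ.real {ω | ε ≤ |X ω|}
      ≤ μ.real {ω | ε ≤ X ω} + μ.real {ω | ε ≤ (-X) ω} := hsplit ▸ measureReal_union_le _ _
    _ ≤ exp (-ε ^ 2 / (2 * c)) + exp (-ε ^ 2 / (2 * c)) :=
      add_le_add (h.measure_ge_le hε) (h.neg.measure_ge_le hε)
    _ = 2 * exp (-ε ^ 2 / (2 * c)) := by ring

end HasSubgaussianMGF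

end ProbabilityTheory

open ProbabilityTheory

section Walk

variable {Ω : Type*} [MeasurableSpace Ω] {μ : Measure Ω} {σ : ℝ≥0} {ξ : ℕ → Ω → ℝ}

lemma hasSubgaussianMGF_nbar (hindep : iIndepFun ξ μ)
    (hdist : ∀ t, μ.map (ξ t) = gaussianReal 0 (σ ^ 2)) (t : ℕ) :
    HasSubgaussianMGF (nbar ξ t) ((#(ancestors t) + 1) * σ ^ 2) μ := by
  rw [nbar_eq_sum_ancestorChain]
  refine (HasSubgaussianMGF.sum_of_iIndepFun hindep fun s _ ↦
    hasSubgaussianMGF_of_map_eq_gaussianReal (hdist s)).mono ?_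
  rw [sum_const, nsmul_eq_mul]
  gcongr
  exact_mod_cast card_ancestorChain_le t

lemma measureReal_lt_abs_nbar_le [IsFiniteMeasure μ] (hindep : iIndepFun ξ μ)
    (hdist : ∀ t, μ.map (ξ t) = gaussianReal 0 (σ ^ 2)) {t : ℕ} {L : ℝ}
    (hdepth : (#(ancestors t) : ℝ) + 1 ≤ L) :
    μ.real {ω | 2 * σ * L < |nbar ξ t ω|} ≤ 2 * exp (-(2 * L)) := by
  have hL : 0 < L := by linarith [Nat.cast_nonneg (α := ℝ) #(ancestors t)]
  have hsubG : HasSubgaussianMGF (nbar ξ t) (L.toNNReal * σ ^ 2) μ :=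
    (hasSubgaussianMGF_nbar hindep hdist t).mono
      (by gcongr; exact NNReal.le_toNNReal_of_coe_le (by exact_mod_cast hdepth))
  rcases eq_or_ne σ 0 with rfl | hσ0
  · rw [pow_two, zero_mul, mul_zero] at hsubG
    have hnull : μ.real {ω | 2 * ((0 : ℝ≥0) : ℝ) * L < |nbar ξ t ω|} = 0 := by
      rw [measureReal_eq_zero_iff]
      refine measure_mono_null (fun ω hω ↦ ?_)
        (ae_iff.mp hsubG.ae_eq_zero_of_hasSubgaussianMGF_zero)
      simp_all
    rw [hnull]
    positivity
  · have hσ : (0 : ℝ) < σ := NNReal.coe_pos.mpr (pos_of_ne_zero hσ0)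
    calc μ.real {ω | 2 * σ * L < |nbar ξ t ω|}
        ≤ μ.real {ω | 2 * σ * L ≤ |nbar ξ t ω|} :=
          measureReal_mono (Set.ofPred_subset_ofPred.mpr fun _ ↦ le_of_lt)
      _ ≤ 2 * exp (-(2 * σ * L) ^ 2 / (2 * ↑(L.toNNReal * σ ^ 2))) :=
        hsubG.measureReal_le_abs_le (by positivity)
      _ = 2 * exp (-(2 * L)) := by
        push_cast
        rw [Real.coe_toNNReal _ hL.le]
        field_simp

end Walk

theorem mrw_tail_bound_general {Ω : Type*} [MeasurableSpace Ω] (μ : Measure Ω)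
    [IsProbabilityMeasure μ] (σ : ℝ≥0) (T : ℕ) (hT : 1 ≤ T) (γ : ℝ) (hγ : γ ∈ Set.Ioo (0:ℝ) 1)
    (ξ : ℕ → Ω → ℝ)
    (hindep : iIndepFun ξ μ)
    (hdist : ∀ t, μ.map (ξ t) = gaussianReal 0 (σ ^ 2))
    (hdepth : ∀ t ∈ Finset.Icc 1 T, ((ancestors t).card : ℝ) + 1 ≤ Real.log (T / γ)) :
    μ {ω | ∃ t ∈ Finset.Icc 1 T, |nbar ξ t ω| > 2 * (σ : ℝ) * Real.log (T / γ)}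
      ≤ ENNReal.ofReal γ := by
  set L := log (T / γ)
  have hγ0 : 0 < γ := hγ.1
  have hL : 1 ≤ L := by
    linarith [hdepth 1 (by simp [hT]), Nat.cast_nonneg (α := ℝ) #(ancestors 1)]
  have hexpL : exp (-L) = γ / T := by
    rw [exp_neg, exp_log (by positivity), inv_div]
  have htwo : 2 ≤ exp L := by linarith [add_one_le_exp L]
  rw [ENNReal.le_ofReal_iff_toReal_le (measure_ne_top _ _) hγ0.le, ← measureReal_def]
  calc μ.real {ω | ∃ t ∈ Icc 1 T, |nbar ξ t ω| > 2 * σ * L}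
      = μ.real (⋃ t ∈ Icc 1 T, {ω | 2 * σ * L < |nbar ξ t ω|}) := by
        congr 1; ext ω; simp
    _ ≤ ∑ t ∈ Icc 1 T, μ.real {ω | 2 * σ * L < |nbar ξ t ω|} :=
        measureReal_biUnion_finset_le _ _
    _ ≤ ∑ t ∈ Icc 1 T, 2 * exp (-(2 * L)) :=
        sum_le_sum fun t ht ↦ measureReal_lt_abs_nbar_le hindep hdist (hdepth t ht)
    _ = 2 * γ * exp (-L) := by
        rw [sum_const, Nat.card_Icc, nsmul_eq_mul, show -(2 * L) = -L + -L by ring, exp_add,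
          hexpL]
        field_simp
        simp
    _ ≤ γ := by
        rw [exp_neg]
        field_simp
        linarith

/-- Tail bound on the multi-scaled random walk built from i.i.d. `N(0,σ²)` increments:
with probability at least `1 − γ`, all `|n̄_t|`, `t ∈ [T]`, are at most `2σ log(T/γ)`. -/
theorem mrw_tail_bound {Ω : Type*} [MeasurableSpace Ω] (μ : Measure Ω)
    [IsProbabilityMeasure μ] (σ : ℝ≥0) (T : ℕ) (hT : 1 ≤ T) (γ : ℝ) (hγ : γ ∈ Set.Ioo (0:ℝ) 1)
    (ξ : ℕ → Ω → ℝ) (hmeas : ∀ t, Measurable (ξ t))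
    (hindep : iIndepFun ξ μ)
    (hdist : ∀ t, μ.map (ξ t) = gaussianReal 0 (σ ^ 2))
    (hdepth : ∀ t ∈ Finset.Icc 1 T, ((ancestors t).card : ℝ) + 1 ≤ Real.log (T / γ)) :
    μ {ω | ∃ t ∈ Finset.Icc 1 T, |nbar ξ t ω| > 2 * (σ : ℝ) * Real.log (T / γ)}
      ≤ ENNReal.ofReal γ :=
  mrw_tail_bound_general μ σ T hT γ hγ ξ hindep hdist hdepth
end
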